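/- arXiv:2306.02086 — 2 statements merged into one kernel-verified Lean document; each statement's English description precedes it below -/
import Mathlib

section
/- Let (Ω, Σ, μ) be a semifinite, decomposable measure space with μ ≠ 0 and let 𝒰 be an ultrafilter on the measure algebra of (Ω, μ). Then the assignment [f] ↦ lim_𝒰 f is a well-defined unital ℂ-algebra homomorphism ω_𝒰 : L^∞(Ω, μ) → ℂ, and for every measurable F ⊆ Ω one has F ∈ 𝒰 if and only if ω_𝒰([1_F]) = 1. -/
open MeasureTheory

/-- An *ultrafilter on the measure algebra* of `(Ω, μ)`: a collection of measurable,
non-null subsets of `Ω`, closed under intersection and under almost-everywhere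
enlargement, containing every measurable set or its complement. -/
structure IsMeasureUltrafilter {Ω : Type*} [MeasurableSpace Ω] (μ : Measure Ω)
    (U : Set (Set Ω)) : Prop where
  measurableSet_of_mem : ∀ F ∈ U, MeasurableSet F
  not_null : ∀ F ∈ U, μ F ≠ 0
  inter_mem : ∀ F ∈ U, ∀ G ∈ U, F ∩ G ∈ U
  mem_of_ae_subset : ∀ F ∈ U, ∀ G : Set Ω, MeasurableSet G → μ (F \ G) = 0 → G ∈ U
  mem_or_compl_mem : ∀ F : Set Ω, MeasurableSet F → F ∈ U ∨ Fᶜ ∈ U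

/-- `UltraLim μ U f a` means `lim_U f = a`: for every `ε > 0` there is `F ∈ U` such that
all averages of `f` over measurable subsets of `F` of finite positive measure are within
`ε` of `a`. -/
def UltraLim {Ω : Type*} [MeasurableSpace Ω] (μ : Measure Ω) (U : Set (Set Ω))
    (f : Ω → ℂ) (a : ℂ) : Prop :=
  ∀ ε : ℝ, 0 < ε → ∃ F ∈ U, ∀ X : Set Ω, X ⊆ F → MeasurableSet X →
    0 < μ X → μ X < ⊤ → ‖(μ X).toReal⁻¹ • ∫ x in X, f x ∂μ - a‖ < ε

/-- A measure is *semifinite* if every measurable set of infinite measure contains a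
measurable subset of finite positive measure. -/
def Semifinite {Ω : Type*} [MeasurableSpace Ω] (μ : Measure Ω) : Prop :=
  ∀ E : Set Ω, MeasurableSet E → μ E = ⊤ →
    ∃ F : Set Ω, F ⊆ E ∧ MeasurableSet F ∧ 0 < μ F ∧ μ F < ⊤

universe u

/-- A measure is *decomposable* if there is a partition of `Ω` into measurable sets of
finite measure which detects measurability and along which `μ` sums. -/
def Decomposable {Ω : Type u} [MeasurableSpace Ω] (μ : Measure Ω) : Prop :=
  ∃ (ι : Type u) (P : ι → Set Ω),
    (∀ i, MeasurableSet (P i)) ∧ (∀ i, μ (P i) < ⊤) ∧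
    (Pairwise fun i j => Disjoint (P i) (P j)) ∧
    (⋃ i, P i) = Set.univ ∧
    (∀ E : Set Ω, (∀ i, MeasurableSet (E ∩ P i)) → MeasurableSet E) ∧
    (∀ E : Set Ω, MeasurableSet E → μ E = ∑' i, μ (E ∩ P i))

open Filter in
/-- `ℂ`-algebra structure on the algebra of germs of `ℂ`-valued functions along a filter. -/
noncomputable instance germAlgebra {α : Type*} {l : Filter α} :
    Algebra ℂ (Filter.Germ l ℂ) :=
  Algebra.ofModule
    (fun r x y => Filter.Germ.inductionOn₂ x y fun f g => by
      simp only [← Filter.Germ.coe_smul, ← Filter.Germ.coe_mul, smul_mul_assoc])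
    (fun r x y => Filter.Germ.inductionOn₂ x y fun f g => by
      simp only [← Filter.Germ.coe_smul, ← Filter.Germ.coe_mul, mul_smul_comm])

/-- `L^∞(Ω, μ)`: the algebra of essentially bounded measurable functions `Ω → ℂ` modulo
equality `μ`-almost everywhere, realized as the subalgebra of the algebra of germs along
the `μ`-a.e. filter consisting of germs of essentially bounded measurable functions. -/
noncomputable def Linfty {Ω : Type*} [MeasurableSpace Ω] (μ : Measure Ω) :
    Subalgebra ℂ (Filter.Germ (MeasureTheory.ae μ) ℂ) where
  carrier := {x | ∃ f : Ω → ℂ, Measurable f ∧ (∃ C : ℝ, ∀ᵐ ω ∂μ, ‖f ω‖ ≤ C) ∧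
    x = (f : Filter.Germ (MeasureTheory.ae μ) ℂ)}
  mul_mem' := by
    rintro x y ⟨f, hf, ⟨Cf, hCf⟩, rfl⟩ ⟨g, hg, ⟨Cg, hCg⟩, rfl⟩
    refine ⟨f * g, hf.mul hg, ⟨|Cf| * |Cg|, ?_⟩, (Filter.Germ.coe_mul f g).symm⟩
    filter_upwards [hCf, hCg] with ω h1 h2
    calc ‖(f * g) ω‖ = ‖f ω‖ * ‖g ω‖ := by simp [norm_mul]
      _ ≤ |Cf| * |Cg| :=
        mul_le_mul (h1.trans (le_abs_self _)) (h2.trans (le_abs_self _)) (norm_nonneg _)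
          (abs_nonneg _)
  add_mem' := by
    rintro x y ⟨f, hf, ⟨Cf, hCf⟩, rfl⟩ ⟨g, hg, ⟨Cg, hCg⟩, rfl⟩
    refine ⟨f + g, hf.add hg, ⟨|Cf| + |Cg|, ?_⟩, (Filter.Germ.coe_add f g).symm⟩
    filter_upwards [hCf, hCg] with ω h1 h2
    calc ‖(f + g) ω‖ ≤ ‖f ω‖ + ‖g ω‖ := norm_add_le _ _
      _ ≤ |Cf| + |Cg| := add_le_add (h1.trans (le_abs_self _)) (h2.trans (le_abs_self _))
  one_mem' :=
    ⟨fun _ => 1, measurable_const, ⟨1, Filter.Eventually.of_forall fun _ => by simp⟩,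
      (Filter.Germ.coe_one (l := MeasureTheory.ae μ)).symm⟩
  zero_mem' :=
    ⟨fun _ => 0, measurable_const, ⟨0, Filter.Eventually.of_forall fun _ => by simp⟩,
      (Filter.Germ.coe_zero (l := MeasureTheory.ae μ)).symm⟩
  algebraMap_mem' := by
    intro r
    refine ⟨fun _ => r, measurable_const,
      ⟨‖r‖, Filter.Eventually.of_forall fun _ => le_rfl⟩, ?_⟩
    rw [Algebra.algebraMap_eq_smul_one, ← Filter.Germ.coe_one (l := MeasureTheory.ae μ),
      ← Filter.Germ.coe_smul]
    congr 1
    funext ω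
    simp

/-- The element of `L^∞(Ω, μ)` determined by a measurable, essentially bounded function. -/
noncomputable def LinftyMk {Ω : Type*} [MeasurableSpace Ω] (μ : Measure Ω) (f : Ω → ℂ)
    (hf : Measurable f) (C : ℝ) (hC : ∀ᵐ ω ∂μ, ‖f ω‖ ≤ C) : Linfty μ :=
  ⟨(f : Filter.Germ (MeasureTheory.ae μ) ℂ), ⟨f, hf, ⟨C, hC⟩, rfl⟩⟩

/-- The class `[1_F]` in `L^∞(Ω, μ)` of the indicator function of a measurable set `F`. -/
noncomputable def indL {Ω : Type*} [MeasurableSpace Ω] (μ : Measure Ω) (F : Set Ω)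
    (hF : MeasurableSet F) : Linfty μ :=
  LinftyMk μ (F.indicator fun _ => (1 : ℂ)) (measurable_const.indicator hF) 1
    (Filter.Eventually.of_forall fun ω => by
      by_cases h : ω ∈ F <;> simp [Set.indicator_apply, h])

/-! The members of `𝒰`, taken up to null sets, generate a filter on `Ω` finer than the a.e.
filter, so every class in `L^∞` can be evaluated by taking a limit along it. For an essentially
bounded measurable `f` this limit exists: by compactness `f` has a cluster point `a` along the
filter, and since `𝒰` decides every measurable set, `f⁻¹(closedBall a ε)` lies in `𝒰` (its
complement would keep `f` away from `a`). Limits are additive and multiplicative, which gives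
the character, and `|f - a| ≤ ε` on a member of `𝒰` bounds every average of `f - a` over its
subsets. -/

open Filter MeasureTheory Topology
open scoped ENNReal

section SetAverage

variable {α E : Type*} [MeasurableSpace α] [NormedAddCommGroup E] [NormedSpace ℝ E]
  [CompleteSpace E] {μ : Measure α} {s : Set α} {f : α → E} {a : E} {r : ℝ}

theorem norm_setAverage_sub_le (hs₀ : μ s ≠ 0) (hs : μ s ≠ ∞)
    (hf : AEStronglyMeasurable f (μ.restrict s)) (h : ∀ᵐ x ∂μ.restrict s, ‖f x - a‖ ≤ r) :
    ‖⨍ x in s, f x ∂μ - a‖ ≤ r := by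
  have : IsFiniteMeasure (μ.restrict s) := isFiniteMeasure_restrict.2 hs
  have hpos : 0 < μ.real s := ENNReal.toReal_pos hs₀ hs
  have hint : IntegrableOn f s μ :=
    Integrable.of_bound hf (‖a‖ + r) <| h.mono fun x hx => by
      linarith [norm_le_norm_add_norm_sub' (f x) a]
  have hsub : ∫ x in s, (f x - a) ∂μ = ∫ x in s, f x ∂μ - μ.real s • a := by
    rw [integral_sub hint (integrable_const a), setIntegral_const]
  calc ‖⨍ x in s, f x ∂μ - a‖ = ‖(μ.real s)⁻¹ • ∫ x in s, (f x - a) ∂μ‖ := by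
        rw [setAverage_eq, hsub, smul_sub, smul_smul, inv_mul_cancel₀ hpos.ne', one_smul]
    _ = (μ.real s)⁻¹ * ‖∫ x in s, (f x - a) ∂μ‖ := by
        rw [norm_smul, Real.norm_of_nonneg (inv_nonneg.2 hpos.le)]
    _ ≤ (μ.real s)⁻¹ * (r * μ.real s) := by
        gcongr
        exact norm_setIntegral_le_of_norm_le_const_ae hs.lt_top h
    _ = r := by field_simp

end SetAverage

namespace Filter.Germ

variable {α : Type*} {l l' : Filter α}

-- Junk where `f` has no limit along `l'`; `limAlgHom` only evaluates convergent germs.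
noncomputable def limAlong (h : l' ≤ l) (x : Germ l ℂ) : ℂ :=
  x.liftOn (limUnder l') fun _ _ hfg => by
    rw [limUnder, limUnder, map_congr (hfg.filter_mono h)]

theorem limAlong_coe_of_tendsto [l'.NeBot] (h : l' ≤ l) {f : α → ℂ} {a : ℂ}
    (hf : Tendsto f l' (𝓝 a)) : limAlong h (f : Germ l ℂ) = a :=
  hf.limUnder_eq

section

variable [l'.NeBot] (h : l' ≤ l) (A : Subalgebra ℂ (Germ l ℂ))
  (hA : ∀ x ∈ A, ∃ f : α → ℂ, x = f ∧ ∃ a, Tendsto f l' (𝓝 a))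

include hA in
theorem tendsto_limAlong {x : A} {f : α → ℂ} (hxf : (x : Germ l ℂ) = f) :
    Tendsto f l' (𝓝 (limAlong h x)) := by
  obtain ⟨g, hxg, a, hg⟩ := hA x x.2
  have hfg : g =ᶠ[l'] f := (Germ.coe_eq.1 (hxg.symm.trans hxf)).filter_mono h
  rw [hxf, limAlong_coe_of_tendsto h (hg.congr' hfg)]
  exact hg.congr' hfg

theorem algebraMap_eq_coe_const (r : ℂ) :
    algebraMap ℂ (Germ l ℂ) r = ((fun _ => r : α → ℂ) : Germ l ℂ) := by
  rw [Algebra.algebraMap_eq_smul_one, ← Germ.coe_one, ← Germ.coe_smul]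
  simp [Pi.smul_def]

noncomputable def limAlgHom : A →ₐ[ℂ] ℂ where
  toFun x := limAlong h x
  map_one' := limAlong_coe_of_tendsto h tendsto_const_nhds
  map_mul' x y := by
    obtain ⟨f, hxf, -⟩ := hA x x.2
    obtain ⟨g, hyg, -⟩ := hA y y.2
    refine tendsto_nhds_unique (tendsto_limAlong h A hA (f := f * g) ?_)
      ((tendsto_limAlong h A hA hxf).mul (tendsto_limAlong h A hA hyg))
    rw [Subalgebra.coe_mul, hxf, hyg, Germ.coe_mul]
  map_zero' := limAlong_coe_of_tendsto h tendsto_const_nhds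
  map_add' x y := by
    obtain ⟨f, hxf, -⟩ := hA x x.2
    obtain ⟨g, hyg, -⟩ := hA y y.2
    refine tendsto_nhds_unique (tendsto_limAlong h A hA (f := f + g) ?_)
      ((tendsto_limAlong h A hA hxf).add (tendsto_limAlong h A hA hyg))
    rw [Subalgebra.coe_add, hxf, hyg, Germ.coe_add]
  commutes' r := by
    show limAlong h (algebraMap ℂ (Germ l ℂ) r) = r
    rw [algebraMap_eq_coe_const]
    exact limAlong_coe_of_tendsto h tendsto_const_nhds

theorem limAlgHom_eq_of_tendsto {x : A} {f : α → ℂ} (hxf : (x : Germ l ℂ) = f) {a : ℂ}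
    (hf : Tendsto f l' (𝓝 a)) : limAlgHom h A hA x = a := by
  show limAlong h x = a
  rw [hxf]
  exact limAlong_coe_of_tendsto h hf

end

end Filter.Germ

namespace IsMeasureUltrafilter

variable {Ω : Type*} [MeasurableSpace Ω] {μ : Measure Ω} {U : Set (Set Ω)}
  (hU : IsMeasureUltrafilter μ U)

include hU in
theorem univ_mem : Set.univ ∈ U :=
  (hU.mem_or_compl_mem _ .univ).resolve_right fun h => hU.not_null _ h (by simp)

def toFilter : Filter Ω where
  sets := {S | ∃ F ∈ U, ∀ᵐ x ∂μ.restrict F, x ∈ S}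
  univ_sets := ⟨Set.univ, hU.univ_mem, by simp⟩
  sets_of_superset := fun ⟨F, hF, hS⟩ hST => ⟨F, hF, hS.mono fun _ hx => hST hx⟩
  inter_sets := fun ⟨F, hF, hS⟩ ⟨G, hG, hT⟩ =>
    ⟨F ∩ G, hU.inter_mem F hF G hG,
      (ae_restrict_of_ae_restrict_of_subset Set.inter_subset_left hS).and
        (ae_restrict_of_ae_restrict_of_subset Set.inter_subset_right hT)⟩

theorem mem_toFilter {F : Set Ω} (hF : F ∈ U) : F ∈ hU.toFilter :=
  ⟨F, hF, ae_restrict_mem (hU.measurableSet_of_mem F hF)⟩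

theorem toFilter_le_ae : hU.toFilter ≤ ae μ := fun S hS =>
  ⟨Set.univ, hU.univ_mem, by rwa [Measure.restrict_univ]⟩

instance toFilter_neBot : hU.toFilter.NeBot := by
  refine ⟨fun h => ?_⟩
  obtain ⟨F, hF, hempty⟩ : (∅ : Set Ω) ∈ hU.toFilter := h ▸ mem_bot
  refine hU.not_null F hF ?_
  simpa using hempty

theorem mem_toFilter_or_compl_mem {S : Set Ω} (hS : MeasurableSet S) :
    S ∈ hU.toFilter ∨ Sᶜ ∈ hU.toFilter :=
  (hU.mem_or_compl_mem S hS).imp hU.mem_toFilter hU.mem_toFilter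

theorem exists_tendsto_toFilter {f : Ω → ℂ} (hf : Measurable f) {C : ℝ}
    (hC : ∀ᵐ x ∂μ, ‖f x‖ ≤ C) : ∃ a, Tendsto f hU.toFilter (𝓝 a) := by
  have hbounded : Metric.closedBall 0 C ∈ map f hU.toFilter :=
    hU.toFilter_le_ae (hC.mono fun x hx => by simpa using hx)
  obtain ⟨a, -, hclust⟩ :=
    (isCompact_closedBall (0 : ℂ) C).exists_clusterPt (le_principal_iff.2 hbounded)
  refine ⟨a, Metric.nhds_basis_closedBall.tendsto_right_iff.2 fun ε hε => ?_⟩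
  refine (hU.mem_toFilter_or_compl_mem (hf measurableSet_closedBall)).resolve_right
    fun hcompl => ?_
  obtain ⟨z, hz, hz'⟩ := clusterPt_iff_nonempty.1 hclust (Metric.ball_mem_nhds a hε)
    (show (Metric.closedBall a ε)ᶜ ∈ map f hU.toFilter from hcompl)
  exact hz' (Metric.ball_subset_closedBall hz)

theorem ultraLim_of_tendsto {f : Ω → ℂ} (hf : Measurable f) {a : ℂ}
    (h : Tendsto f hU.toFilter (𝓝 a)) : UltraLim μ U f a := by
  intro ε hε
  obtain ⟨F, hF, hclose⟩ :=
    Metric.nhds_basis_closedBall.tendsto_right_iff.1 h (ε / 2) (half_pos hε)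
  refine ⟨F, hF, fun X hXF _ hX₀ hX => ?_⟩
  have hcloseX : ∀ᵐ x ∂μ.restrict X, ‖f x - a‖ ≤ ε / 2 :=
    ae_restrict_of_ae_restrict_of_subset hXF <|
      hclose.mono fun _ hx => by simpa [dist_eq_norm] using hx
  calc ‖(μ X).toReal⁻¹ • ∫ x in X, f x ∂μ - a‖ = ‖⨍ x in X, f x ∂μ - a‖ := by
        rw [setAverage_eq, measureReal_def]
    _ ≤ ε / 2 := norm_setAverage_sub_le hX₀.ne' hX.ne hf.aestronglyMeasurable hcloseX
    _ < ε := half_lt_self hε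

noncomputable def character : Linfty μ →ₐ[ℂ] ℂ :=
  Germ.limAlgHom hU.toFilter_le_ae (Linfty μ) fun _ ⟨f, hf, ⟨_, hC⟩, hx⟩ =>
    ⟨f, hx, hU.exists_tendsto_toFilter hf hC⟩

theorem character_eq_of_tendsto {x : Linfty μ} {f : Ω → ℂ} (hxf : (x : Germ (ae μ) ℂ) = f)
    {a : ℂ} (hf : Tendsto f hU.toFilter (𝓝 a)) : hU.character x = a :=
  Germ.limAlgHom_eq_of_tendsto _ _ _ hxf hf

end IsMeasureUltrafilter

theorem ultrafilter_gives_character_general {Ω : Type u} [MeasurableSpace Ω]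
    (μ : Measure Ω) (U : Set (Set Ω)) (hU : IsMeasureUltrafilter μ U) :
    ∃ ω : Linfty μ →ₐ[ℂ] ℂ,
      (∀ (f : Ω → ℂ) (hf : Measurable f) (C : ℝ) (hC : ∀ᵐ x ∂μ, ‖f x‖ ≤ C),
        UltraLim μ U f (ω (LinftyMk μ f hf C hC))) ∧
      (∀ (F : Set Ω) (hF : MeasurableSet F), F ∈ U ↔ ω (indL μ F hF) = 1) := by
  refine ⟨hU.character, fun f hf C hC => ?_, fun F hF => ?_⟩
  · obtain ⟨a, ha⟩ := hU.exists_tendsto_toFilter hf hC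
    rw [hU.character_eq_of_tendsto rfl ha]
    exact hU.ultraLim_of_tendsto hf ha
  · have h_indicator {c : ℂ} {G : Set Ω} (hG : G ∈ U)
        (hc : ∀ x ∈ G, F.indicator (fun _ => 1) x = c) :
        hU.character (indL μ F hF) = c :=
      hU.character_eq_of_tendsto rfl <| tendsto_const_nhds.congr' <|
        eventually_of_mem (hU.mem_toFilter hG) fun x hx => (hc x hx).symm
    refine ⟨fun hFU => h_indicator (c := 1) hFU fun _ hx => Set.indicator_of_mem hx _, fun h1 => ?_⟩
    by_contra hFU
    have h0 := h_indicator (c := 0) ((hU.mem_or_compl_mem F hF).resolve_left hFU)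
      fun _ hx => Set.indicator_of_notMem hx _
    exact one_ne_zero (h1.symm.trans h0)

/-- Theorem II.5 and Theorem II.7, second half. Every ultrafilter `𝒰` on
the measure algebra determines a character `ω_𝒰` of `L^∞(Ω, μ)` by `ω_𝒰([f]) = lim_𝒰 f`,
and `F ∈ 𝒰` if and only if `ω_𝒰([1_F]) = 1`. -/
theorem ultrafilter_gives_character {Ω : Type u} [MeasurableSpace Ω]
    (μ : Measure Ω) (hμ : μ ≠ 0) (hsemi : Semifinite μ) (hdec : Decomposable μ)
    (U : Set (Set Ω)) (hU : IsMeasureUltrafilter μ U) :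
    ∃ ω : Linfty μ →ₐ[ℂ] ℂ,
      (∀ (f : Ω → ℂ) (hf : Measurable f) (C : ℝ) (hC : ∀ᵐ x ∂μ, ‖f x‖ ≤ C),
        UltraLim μ U f (ω (LinftyMk μ f hf C hC))) ∧
      (∀ (F : Set Ω) (hF : MeasurableSet F), F ∈ U ↔ ω (indL μ F hF) = 1) :=
  ultrafilter_gives_character_general μ U hU
end

section
/- Let Ω be a compact Hausdorff topological space equipped with its Borel σ-algebra and a probability measure μ that is inner regular with respect to compact sets and faithful (μ(U) > 0 for every nonempty open U). Then for every ultrafilter 𝒰 on the measure algebra of (Ω, μ) there exists ω ∈ Ω such that 𝒟_ω ⊆ 𝒰. -/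
open MeasureTheory

universe u

open Set

/-!
If `ω` lies in the support of `μ` restricted to every member of `U`, then every almost-neighborhood
`X` of `ω` belongs to `U`: otherwise `Xᶜ ∈ U`, and a neighborhood `V` of `ω` with `μ (V \ X) = 0`
witnesses `ω ∉ (μ.restrict Xᶜ).support`. Such an `ω` exists because these supports are closed,
nonempty (by compactness of `Ω`, a measure with empty support vanishes) and directed downwards,
as `U` is closed under intersections.
-/

namespace MeasureTheory.Measure

variable {Ω : Type*} [TopologicalSpace Ω] [MeasurableSpace Ω]

lemma nonempty_support_of_compactSpace [CompactSpace Ω] {μ : Measure Ω} (hμ : μ ≠ 0) :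
    μ.support.Nonempty := by
  by_contra h
  have hcompl : (univ : Set Ω) ⊆ μ.supportᶜ := by
    rw [not_nonempty_iff_eq_empty.mp h, compl_empty]
  exact hμ (measure_univ_eq_zero.mp
    (measure_eq_zero_of_isCompact_subset_compl_support isCompact_univ hcompl))

lemma support_restrict_mono {μ : Measure Ω} {s t : Set Ω} (hst : s ⊆ t) :
    (μ.restrict s).support ⊆ (μ.restrict t).support :=
  support_mono (restrict_mono hst le_rfl)

end MeasureTheory.Measure

namespace IsMeasureUltrafilter

variable {Ω : Type*} [MeasurableSpace Ω] {μ : Measure Ω} {U : Set (Set Ω)}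

lemma univ_mem_s9 (hU : IsMeasureUltrafilter μ U) : univ ∈ U :=
  (hU.mem_or_compl_mem univ MeasurableSet.univ).resolve_right
    fun h => hU.not_null _ h (by rw [compl_univ, measure_empty])

variable [TopologicalSpace Ω]

lemma exists_forall_mem_support_restrict [CompactSpace Ω] (hU : IsMeasureUltrafilter μ U) :
    ∃ ω, ∀ F ∈ U, ω ∈ (μ.restrict F).support := by
  have : Nonempty U := ⟨⟨univ, hU.univ_mem_s9⟩⟩
  obtain ⟨ω, hω⟩ := IsCompact.nonempty_iInter_of_directed_nonempty_isCompact_isClosed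
    (fun F : U => (μ.restrict F).support)
    (fun F G => ⟨⟨F ∩ G, hU.inter_mem F F.2 G G.2⟩,
      Measure.support_restrict_mono inter_subset_left,
      Measure.support_restrict_mono inter_subset_right⟩)
    (fun F => Measure.nonempty_support_of_compactSpace
      (by simpa only [ne_eq, Measure.restrict_eq_zero] using hU.not_null F F.2))
    (fun _ => Measure.isClosed_support.isCompact)
    (fun _ => Measure.isClosed_support)
  exact ⟨ω, fun F hF => mem_iInter.mp hω ⟨F, hF⟩⟩

lemma mem_of_measure_diff_eq_zero (hU : IsMeasureUltrafilter μ U) {ω : Ω}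
    (hω : ∀ F ∈ U, ω ∈ (μ.restrict F).support) {X V : Set Ω} (hX : MeasurableSet X)
    (hV : IsOpen V) (hωV : ω ∈ V) (hVX : μ (V \ X) = 0) : X ∈ U := by
  refine (hU.mem_or_compl_mem X hX).resolve_right fun hXc => ?_
  have hpos : 0 < μ.restrict Xᶜ V :=
    (Measure.mem_support_iff_forall ω).mp (hω _ hXc) V (hV.mem_nhds hωV)
  rw [Measure.restrict_apply' hX.compl, ← sdiff_eq, hVX] at hpos
  exact hpos.false

end IsMeasureUltrafilter

theorem ultrafilter_contains_neighborhood_filter_general {Ω : Type u} [TopologicalSpace Ω]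
    [CompactSpace Ω] [MeasurableSpace Ω]
    (μ : Measure Ω)
    (U : Set (Set Ω)) (hU : IsMeasureUltrafilter μ U) :
    ∃ ω : Ω,
      {X : Set Ω | MeasurableSet X ∧ ∃ V : Set Ω, IsOpen V ∧ ω ∈ V ∧ μ (V \ X) = 0} ⊆ U := by
  obtain ⟨ω, hω⟩ := hU.exists_forall_mem_support_restrict
  exact ⟨ω, fun X ⟨hX, V, hV, hωV, hVX⟩ => hU.mem_of_measure_diff_eq_zero hω hX hV hωV hVX⟩

/-- Proposition III.3. On a compact Hausdorff space with a faithful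
inner-regular Borel probability measure, every ultrafilter on the measure algebra contains
the filter of almost-neighborhoods `𝒟_ω` of some point `ω`. -/
theorem ultrafilter_contains_neighborhood_filter {Ω : Type u} [TopologicalSpace Ω]
    [CompactSpace Ω] [T2Space Ω] [MeasurableSpace Ω] [BorelSpace Ω]
    (μ : Measure Ω) [IsProbabilityMeasure μ] [μ.InnerRegular]
    (hfaithful : ∀ V : Set Ω, IsOpen V → V.Nonempty → 0 < μ V)
    (U : Set (Set Ω)) (hU : IsMeasureUltrafilter μ U) :
    ∃ ω : Ω,
      {X : Set Ω | MeasurableSet X ∧ ∃ V : Set Ω, IsOpen V ∧ ω ∈ V ∧ μ (V \ X) = 0} ⊆ U :=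
  ultrafilter_contains_neighborhood_filter_general μ U hU
end
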